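/- arXiv:2412.11805 — 6 statements merged into one kernel-verified Lean document; each statement's English description precedes it below -/
import Mathlib

section
/- For any nonzero real numbers s and t and any odd integer m, there exist a matrix γ in SL₂(ℤ) and a real number r such that γ * (diagonal matrix with entries s, t) * (upper unitriangular matrix with top-right entry r) equals the matrix with rows (m·s, 0) and (2·s, t/m). -/
/-- The shear clears the top-right entry; `a * d - b * c = 1` then makes the bottom-right one `t / a`. -/
theorem Matrix.mul_diagonal_mul_unitriangular_eq_lowerTriangular {K : Type*} [Field K]
    {a b c d : K} (hdet : a * d - b * c = 1) (ha : a ≠ 0) {s : K} (hs : s ≠ 0) (t : K) :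
    !![a, b; c, d] * !![s, 0; 0, t] * !![1, -(b * t) / (a * s); 0, 1]
      = !![a * s, 0; c * s, t / a] := by
  have hd : d = (1 + b * c) / a := by field_simp; linear_combination hdet
  ext i j
  fin_cases i <;> fin_cases j <;> simp [Matrix.mul_apply, Fin.sum_univ_succ, hd] <;>
    field_simp <;> ring

theorem stmt0_general (s t : ℝ) (hs : s ≠ 0) (m : ℤ) (hm : Odd m) :
    ∃ (γ : Matrix.SpecialLinearGroup (Fin 2) ℤ) (r : ℝ),
      (γ.val.map (fun x : ℤ => (x : ℝ))) * !![s, 0; 0, t] * !![1, r; 0, 1]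
        = !![(m : ℝ) * s, 0; 2 * s, t / (m : ℝ)] := by
  obtain ⟨k, rfl⟩ := hm
  have hm0 : ((2 * k + 1 : ℤ) : ℝ) ≠ 0 := by exact_mod_cast (by omega : 2 * k + 1 ≠ 0)
  have hdet : ((2 * k + 1 : ℤ) : ℝ) * 1 - (k : ℝ) * 2 = 1 := by push_cast; ring
  have hγ : (!![2 * k + 1, k; 2, 1] : Matrix (Fin 2) (Fin 2) ℤ).map (fun x : ℤ => (x : ℝ))
      = !![((2 * k + 1 : ℤ) : ℝ), k; 2, 1] := by
    ext i j; fin_cases i <;> fin_cases j <;> simp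
  -- oddness of `m` is exactly what makes `!![m, k; 2, 1]` unimodular
  refine ⟨⟨!![2 * k + 1, k; 2, 1], by simp [Matrix.det_fin_two_of]; ring⟩,
    -(k * t) / ((2 * k + 1 : ℤ) * s), ?_⟩
  dsimp only
  rw [hγ]
  exact Matrix.mul_diagonal_mul_unitriangular_eq_lowerTriangular hdet hm0 hs t

/-- For any nonzero real numbers `s` and `t` and any odd integer `m`, there exist
`γ ∈ SL₂(ℤ)` and `r ∈ ℝ` such that `γ * diag(s, t) * !![1, r; 0, 1] = !![m*s, 0; 2*s, t/m]`. -/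
theorem stmt0 (s t : ℝ) (hs : s ≠ 0) (ht : t ≠ 0) (m : ℤ) (hm : Odd m) :
    ∃ (γ : Matrix.SpecialLinearGroup (Fin 2) ℤ) (r : ℝ),
      (γ.val.map (fun x : ℤ => (x : ℝ))) * !![s, 0; 0, t] * !![1, r; 0, 1]
        = !![(m : ℝ) * s, 0; 2 * s, t / (m : ℝ)] :=
  stmt0_general s t hs m hm
end

section
/- For every n ≥ 2, every matrix in SL_n(ℚ) can be written as a product γ · p where γ ∈ SL_n(ℤ) and p is an upper triangular matrix in SL_n(ℚ); that is, SL_n(ℚ) = SL_n(ℤ) · P_n(ℚ). -/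
/-!
In a Bézout domain every pair `(a, b)` is killed by a coprime pair `(r, t)`, and a coprime pair is
the second row of a determinant-one `2 × 2` matrix. Acting on rows `k, j` by that matrix clears the
entry `(j, c)` and keeps every column in which both rows vanish, so sweeping the columns from left
to right brings any square matrix to upper triangular form by left multiplication with `SL_n(R)`.
For `g ∈ SL_n(K)`, `K` the fraction field, apply this to `b • g` with `b` a common denominator:
then `γ g` is upper triangular and `g = γ⁻¹ (γ g)`.
-/

open Matrix

theorem IsBezout.exists_isCoprime_mul_add_mul_eq_zero {R : Type*} [CommRing R] [IsDomain R]
    [IsBezout R] (a b : R) : ∃ r t : R, IsCoprime r t ∧ r * a + t * b = 0 := by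
  obtain ⟨x, y, hxy⟩ := IsBezout.gcd_eq_sum a b
  obtain ⟨a', ha⟩ := IsBezout.gcd_dvd_left a b
  obtain ⟨b', hb⟩ := IsBezout.gcd_dvd_right a b
  generalize IsBezout.gcd a b = d at hxy ha hb
  subst ha hb
  rcases eq_or_ne d 0 with rfl | hd
  · exact ⟨0, 1, isCoprime_one_right, by ring⟩
  · refine ⟨-b', a', ⟨-y, x, mul_left_cancel₀ hd ?_⟩, by ring⟩
    linear_combination hxy

namespace Matrix

variable {R ι : Type*} [CommRing R] [Fintype ι] [DecidableEq ι]

theorem det_updateRow_updateRow_one {k j : ι} (hkj : k ≠ j) (p q r t : R) :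
    (((1 : Matrix ι ι R).updateRow k (p • Pi.single k 1 + q • Pi.single j 1)).updateRow j
      (r • Pi.single k 1 + t • Pi.single j 1)).det = p * t - q * r := by
  have hone : ∀ i, (1 : Matrix ι ι R).updateRow i (Pi.single i 1) = 1 := fun i => by
    rw [← updateRow_eq_self (1 : Matrix ι ι R) i]
    congr 1
    · simp
    · ext; simp [one_apply, Pi.single_apply, eq_comm]
  have hswap : ((1 : Matrix ι ι R).updateRow j (Pi.single k 1)).updateRow k (Pi.single j 1) =
      swap R k j := by
    ext a b
    simp only [swap, Equiv.Perm.permMatrix, PEquiv.toMatrix_apply, Equiv.toPEquiv_apply,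
      Option.mem_def, Option.some.injEq]
    rcases eq_or_ne a k with rfl | hak
    · simp [Pi.single_apply, eq_comm]
    rcases eq_or_ne a j with rfl | haj
    · simp [hak, Pi.single_apply, eq_comm]
    · simp [hak, haj, Equiv.swap_apply_of_ne_of_ne, one_apply]
  have hrepeat_k :
      (((1 : Matrix ι ι R).updateRow j (Pi.single k 1)).updateRow k (Pi.single k 1)).det = 0 :=
    det_zero_of_row_eq hkj (by simp [hkj.symm])
  have hrepeat_j : ((1 : Matrix ι ι R).updateRow k (Pi.single j 1)).det = 0 :=
    det_zero_of_row_eq hkj (by ext; simp [hkj.symm, one_apply, Pi.single_apply, eq_comm])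
  set x : ι → R := p • Pi.single k 1 + q • Pi.single j 1
  have hdet_k : ((1 : Matrix ι ι R).updateRow k x).det = p := by
    rw [det_updateRow_add, det_updateRow_smul, det_updateRow_smul, hone, hrepeat_j, det_one]
    ring
  have hdet_j : (((1 : Matrix ι ι R).updateRow k x).updateRow j (Pi.single k 1)).det = -q := by
    rw [updateRow_comm _ hkj, det_updateRow_add, det_updateRow_smul, det_updateRow_smul,
      hrepeat_k, hswap, swap, det_permutation, Equiv.Perm.sign_swap hkj]
    push_cast
    ring
  have hrow_j : ((1 : Matrix ι ι R).updateRow k x).updateRow j (Pi.single j 1) =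
      (1 : Matrix ι ι R).updateRow k x := by
    rw [updateRow_comm _ hkj, hone]
  rw [det_updateRow_add, det_updateRow_smul, det_updateRow_smul, hdet_j, hrow_j, hdet_k]
  ring

namespace SpecialLinearGroup

variable [IsDomain R] [IsBezout R]

theorem exists_mul_apply_eq_zero {κ : Type*} (A : Matrix ι κ R) {k j : ι} (hkj : k ≠ j)
    (c : κ) :
    ∃ γ : SpecialLinearGroup ι R, ((γ : Matrix ι ι R) * A) j c = 0 ∧
      (∀ i, i ≠ k → i ≠ j → ((γ : Matrix ι ι R) * A) i = A i) ∧
      ∀ s, A k s = 0 → A j s = 0 →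
        ((γ : Matrix ι ι R) * A) k s = 0 ∧ ((γ : Matrix ι ι R) * A) j s = 0 := by
  obtain ⟨r, t, ⟨x, y, hxy⟩, hrt⟩ :=
    IsBezout.exists_isCoprime_mul_add_mul_eq_zero (A k c) (A j c)
  let γ : SpecialLinearGroup ι R :=
    ⟨((1 : Matrix ι ι R).updateRow k (y • Pi.single k 1 + (-x) • Pi.single j 1)).updateRow j
      (r • Pi.single k 1 + t • Pi.single j 1),
      by rw [det_updateRow_updateRow_one hkj]; linear_combination hxy⟩
  have hγA : (γ : Matrix ι ι R) * A =
      (A.updateRow k (y • A k + (-x) • A j)).updateRow j (r • A k + t • A j) := by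
    simp only [γ, updateRow_mul, Matrix.one_mul, add_vecMul, smul_vecMul, single_vecMul,
      one_smul]
    rfl
  refine ⟨γ, ?_, fun i hik hij => ?_, fun s hks hjs => ?_⟩
  · simp [hγA, ← hrt]
  · simp [hγA, hik, hij]
  · simp [hγA, hkj, hks, hjs]

variable [LinearOrder ι]

theorem exists_mul_clear_column (A : Matrix ι ι R) {S : Finset ι} {a : ι}
    (hS : ∀ s ∈ S, s < a) (hA : ∀ s ∈ S, ∀ i, s < i → A i s = 0) :
    ∃ γ : SpecialLinearGroup ι R,
      ∀ s ∈ insert a S, ∀ i, s < i → ((γ : Matrix ι ι R) * A) i s = 0 := by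
  suffices ∀ T : Finset ι, ∃ γ : SpecialLinearGroup ι R,
      (∀ s ∈ S, ∀ i, s < i → ((γ : Matrix ι ι R) * A) i s = 0) ∧
      ∀ i ∈ T, a < i → ((γ : Matrix ι ι R) * A) i a = 0 by
    obtain ⟨γ, hγS, hγa⟩ := this Finset.univ
    refine ⟨γ, fun s hs i hi => ?_⟩
    rcases Finset.mem_insert.1 hs with rfl | hs
    exacts [hγa i (Finset.mem_univ i) hi, hγS s hs i hi]
  intro T
  induction T using Finset.induction_on with
  | empty => exact ⟨1, by simpa using hA, by simp⟩
  | insert j T hjT ih =>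
    obtain ⟨γ, hγS, hγT⟩ := ih
    rcases le_or_gt j a with hja | haj
    · exact ⟨γ, hγS, fun i hi hai => (Finset.mem_insert.1 hi).elim
        (fun hij => absurd (hij ▸ hai) hja.not_gt) (hγT i · hai)⟩
    obtain ⟨δ, hδj, hrows, hzeros⟩ :=
      exists_mul_apply_eq_zero ((γ : Matrix ι ι R) * A) haj.ne a
    refine ⟨δ * γ, fun s hs i hsi => ?_, fun i hi hai => ?_⟩
    all_goals rw [coe_mul, Matrix.mul_assoc]
    · have hzero := hzeros s (hγS s hs a (hS s hs)) (hγS s hs j ((hS s hs).trans haj))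
      by_cases hia : i = a
      · exact hia ▸ hzero.1
      by_cases hij : i = j
      · exact hij ▸ hzero.2
      · rw [hrows i hia hij]; exact hγS s hs i hsi
    · rcases Finset.mem_insert.1 hi with rfl | hiT
      · exact hδj
      · rw [hrows i hai.ne' (ne_of_mem_of_not_mem hiT hjT)]; exact hγT i hiT hai

theorem exists_mul_blockTriangular_id (A : Matrix ι ι R) :
    ∃ γ : SpecialLinearGroup ι R, ((γ : Matrix ι ι R) * A).BlockTriangular id := by
  suffices ∀ S : Finset ι, ∃ γ : SpecialLinearGroup ι R,
      ∀ s ∈ S, ∀ i, s < i → ((γ : Matrix ι ι R) * A) i s = 0 by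
    obtain ⟨γ, hγ⟩ := this Finset.univ
    exact ⟨γ, fun i s h => hγ s (Finset.mem_univ s) i h⟩
  intro S
  induction S using Finset.induction_on_max with
  | empty => exact ⟨1, by simp⟩
  | insert a S hS ih =>
    obtain ⟨γ, hγ⟩ := ih
    obtain ⟨δ, hδ⟩ := exists_mul_clear_column _ hS hγ
    exact ⟨δ * γ, by simpa only [coe_mul, Matrix.mul_assoc] using hδ⟩

theorem exists_eq_map_mul_blockTriangular_id {K : Type*} [Field K] [Algebra R K]
    [IsFractionRing R K] (g : SpecialLinearGroup ι K) :
    ∃ (γ : SpecialLinearGroup ι R) (p : SpecialLinearGroup ι K),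
      (p : Matrix ι ι K).BlockTriangular id ∧ g = map (algebraMap R K) γ * p := by
  obtain ⟨b, hb⟩ := IsLocalization.exist_integer_multiples_of_finite (nonZeroDivisors R)
    fun ij : ι × ι => g ij.1 ij.2
  choose A hA using hb
  obtain ⟨γ, hγ⟩ := exists_mul_blockTriangular_id (Matrix.of fun i j => A (i, j))
  refine ⟨γ⁻¹, map (algebraMap R K) γ * g, fun i j hij => ?_, by simp⟩
  have hbg : (of fun i j => A (i, j)).map (algebraMap R K) = (b : R) • (g : Matrix ι ι K) := by
    ext i j; exact hA (i, j)
  have hmap : ((γ : Matrix ι ι R) * of fun i j => A (i, j)).map (algebraMap R K) =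
      (b : R) • ((map (algebraMap R K) γ * g : SpecialLinearGroup ι K) : Matrix ι ι K) := by
    rw [Matrix.map_mul, hbg, Matrix.mul_smul, coe_mul, map_apply_coe, RingHom.mapMatrix_apply]
  have hentry := congrFun₂ hmap i j
  rw [map_apply, hγ hij, map_zero, smul_apply, Algebra.smul_def, eq_comm] at hentry
  exact (mul_eq_zero.1 hentry).resolve_left
    (IsFractionRing.to_map_ne_zero_of_mem_nonZeroDivisors b.2)

end SpecialLinearGroup

end Matrix

theorem stmt1_general (n : ℕ) (g : Matrix.SpecialLinearGroup (Fin n) ℚ) :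
    ∃ (γ : Matrix.SpecialLinearGroup (Fin n) ℤ) (p : Matrix.SpecialLinearGroup (Fin n) ℚ),
      (∀ i j : Fin n, j < i → p.val i j = 0) ∧
      g = Matrix.SpecialLinearGroup.map (Int.castRingHom ℚ) γ * p := by
  obtain ⟨γ, p, hp, rfl⟩ :=
    SpecialLinearGroup.exists_eq_map_mul_blockTriangular_id (R := ℤ) g
  exact ⟨γ, p, fun i j hij => hp hij, rfl⟩

/-- For every `n ≥ 2`, every matrix in `SL_n(ℚ)` is a product `γ * p` with
`γ ∈ SL_n(ℤ)` (viewed in `SL_n(ℚ)` via the inclusion `ℤ → ℚ`) and `p` upper triangular in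
`SL_n(ℚ)`; that is, `SL_n(ℚ) = SL_n(ℤ) · P_n(ℚ)`. -/
theorem stmt1 (n : ℕ) (hn : 2 ≤ n) (g : Matrix.SpecialLinearGroup (Fin n) ℚ) :
    ∃ (γ : Matrix.SpecialLinearGroup (Fin n) ℤ) (p : Matrix.SpecialLinearGroup (Fin n) ℚ),
      (∀ i j : Fin n, j < i → p.val i j = 0) ∧
      g = Matrix.SpecialLinearGroup.map (Int.castRingHom ℚ) γ * p :=
  stmt1_general n g
end

section
/- The group SL₂(ℤ) acts transitively on the elements of order n in the torus 𝕋² = (ℝ/ℤ)²: if z and z' are elements of (ℝ/ℤ)² both of exact order n, then there exists γ ∈ SL₂(ℤ) with γ·z = z'. -/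
/-!
A point of order `n` of `(ℝ/ℤ)²` has the form `z = (c₀ t, c₁ t)` with `t = 1/n` and `c ∈ ℤ²`.
Euclid's algorithm, realised inside `SL₂(ℤ)`, moves `c` to `(g, 0)` with `g = gcd(c₀, c₁)`, hence
`z` to `(g t, 0)`. Since `SL₂(ℤ)` acts by automorphisms, `g t` still has order `n`, so `g` is
invertible mod `n`; with `u g + v n = 1` the matrix `[[u, v], [-n, g]]` sends `(g t, 0)` to
`(t, 0)`. So every point of order `n` lies in the orbit of `(1/n, 0)`.
-/

open Matrix Matrix.Module
open scoped MatrixGroups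

theorem Matrix.Module.smul_smul_eq_mulVec_smul {ι R A : Type*} [Fintype ι] [DecidableEq ι]
    [Ring R] [AddCommGroup A] [Module R A] (M : Matrix ι ι R) (c : ι → R) (t : A) :
    M • (fun i => c i • t) = fun i => (M *ᵥ c) i • t := by
  ext i
  simp [mulVec, dotProduct, Finset.sum_smul, mul_smul]

theorem addOrderOf_vecCons_zero {A : Type*} [AddMonoid A] (x : A) :
    addOrderOf ![x, 0] = addOrderOf x := by
  have hsingle : ![x, 0] = Pi.single 0 x := by
    ext i; fin_cases i <;> simp
  rw [hsingle]
  exact addOrderOf_injective (AddMonoidHom.single (fun _ : Fin 2 => A) 0)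
    (Pi.single_injective (M := fun _ : Fin 2 => A) 0) x

theorem IsOfFinAddOrder.coprime_of_addOrderOf_nsmul_eq {A : Type*} [AddMonoid A] {t : A}
    (ht : IsOfFinAddOrder t) {m : ℕ} (h : addOrderOf (m • t) = addOrderOf t) :
    m.Coprime (addOrderOf t) := by
  rw [ht.addOrderOf_nsmul, Nat.div_eq_self] at h
  exact Nat.coprime_comm.mp (h.resolve_left ht.addOrderOf_pos.ne')

namespace Matrix.SpecialLinearGroup

theorem addOrderOf_smul {ι R A : Type*} [Fintype ι] [DecidableEq ι] [CommRing R]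
    [AddCommGroup A] [Module R A] (γ : SpecialLinearGroup ι R) (z : ι → A) :
    addOrderOf ((γ : Matrix ι ι R) • z) = addOrderOf z := by
  refine addOrderOf_injective (DistribSMul.toAddMonoidHom (ι → A) (γ : Matrix ι ι R))
    (fun x y hxy => ?_) z
  have h := congrArg (((γ⁻¹ : SpecialLinearGroup ι R) : Matrix ι ι R) • ·) hxy
  simpa only [DistribSMul.toAddMonoidHom_apply, smul_smul, ← coe_mul, inv_mul_cancel, coe_one,
    one_smul] using h

theorem exists_mulVec_eq_of_isCoprime {R : Type*} [CommRing R] {a b : R} (h : IsCoprime a b) :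
    ∃ γ : SL(2, R), (γ : Matrix (Fin 2) (Fin 2) R) *ᵥ ![a, b] = ![1, 0] := by
  obtain ⟨u, v, huv⟩ := h
  refine ⟨⟨!![u, v; -b, a], by rw [det_fin_two_of]; linear_combination huv⟩, ?_⟩
  ext i
  fin_cases i <;> simp [mulVec, huv]
  ring

theorem exists_mulVec_eq_gcd (c : Fin 2 → ℤ) :
    ∃ γ : SL(2, ℤ), (γ : Matrix (Fin 2) (Fin 2) ℤ) *ᵥ c = ![(Int.gcd (c 0) (c 1) : ℤ), 0] := by
  rcases Nat.eq_zero_or_pos (Int.gcd (c 0) (c 1)) with hg | hg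
  · obtain ⟨h0, h1⟩ := Int.gcd_eq_zero_iff.mp hg
    refine ⟨1, ?_⟩
    ext i
    fin_cases i <;> simp [h0, h1]
  · obtain ⟨a, b, hab, ha, hb⟩ := Int.exists_gcd_one hg
    obtain ⟨γ, hγ⟩ := exists_mulVec_eq_of_isCoprime (Int.isCoprime_iff_gcd_eq_one.mpr hab)
    refine ⟨γ, ?_⟩
    set g : ℤ := (Int.gcd (c 0) (c 1) : ℤ)
    have hc : c = g • ![a, b] := by
      ext i; fin_cases i <;> simp [mul_comm, ha, hb]
    rw [hc, mulVec_smul, hγ]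
    ext i; fin_cases i <;> simp

theorem exists_smul_nsmul_eq_of_coprime {A : Type*} [AddCommGroup A] {t : A} {m n : ℕ}
    (ht : n • t = 0) (hm : m.Coprime n) :
    ∃ γ : SL(2, ℤ), (γ : Matrix (Fin 2) (Fin 2) ℤ) • ![m • t, 0] = ![t, 0] := by
  obtain ⟨u, v, huv⟩ := Nat.isCoprime_iff_coprime.mpr hm
  replace ht : (n : ℤ) • t = 0 := by rwa [natCast_zsmul]
  refine ⟨⟨!![u, v; -n, m], by rw [det_fin_two_of]; linear_combination huv⟩, ?_⟩
  ext i
  fin_cases i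
  · simp [← natCast_zsmul, smul_smul]
    rw [show u * m = 1 - v * n by linear_combination huv, sub_smul, mul_smul, ht, smul_zero,
      one_smul, sub_zero]
  · simp [← natCast_zsmul, smul_smul]
    rw [mul_comm, mul_smul, ht, smul_zero]

theorem exists_smul_eq_of_mem_zmultiples {A : Type*} [AddCommGroup A] {t : A}
    (ht : IsOfFinAddOrder t) {z : Fin 2 → A} (hzt : ∀ i, z i ∈ AddSubgroup.zmultiples t)
    (hz : addOrderOf z = addOrderOf t) :
    ∃ γ : SL(2, ℤ), (γ : Matrix (Fin 2) (Fin 2) ℤ) • z = ![t, 0] := by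
  choose c hc using fun i => AddSubgroup.mem_zmultiples_iff.mp (hzt i)
  obtain ⟨γ₁, hγ₁⟩ := exists_mulVec_eq_gcd c
  set g := Int.gcd (c 0) (c 1)
  have h₁ : (γ₁ : Matrix (Fin 2) (Fin 2) ℤ) • z = ![g • t, 0] := by
    rw [← funext hc, smul_smul_eq_mulVec_smul, hγ₁]
    ext i; fin_cases i <;> simp
  have hg : addOrderOf (g • t) = addOrderOf t := by
    rw [← addOrderOf_vecCons_zero, ← h₁, addOrderOf_smul, hz]
  obtain ⟨γ₂, hγ₂⟩ := exists_smul_nsmul_eq_of_coprime (addOrderOf_nsmul_eq_zero t)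
    (ht.coprime_of_addOrderOf_nsmul_eq hg)
  exact ⟨γ₂ * γ₁, by rw [coe_mul, mul_smul, h₁, hγ₂]⟩

end Matrix.SpecialLinearGroup

namespace AddCircle

variable {𝕜 : Type*} [Field 𝕜] [LinearOrder 𝕜] [IsStrictOrderedRing 𝕜] {p : 𝕜} [Fact (0 < p)]
  {n : ℕ}

theorem mem_zmultiples_of_nsmul_eq_zero {u : AddCircle p} (hn : 0 < n) (h : n • u = 0) :
    u ∈ AddSubgroup.zmultiples ((p / n : 𝕜) : AddCircle p) := by
  obtain ⟨m, -, rfl⟩ := (AddCircle.nsmul_eq_zero_iff hn).mp h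
  refine ⟨m, ?_⟩
  change (m : ℤ) • _ = _
  rw [natCast_zsmul, ← coe_nsmul, nsmul_eq_mul, mul_div_assoc', div_mul_eq_mul_div]

theorem exists_SL2_smul_eq_of_addOrderOf_eq (hn : 0 < n) {z : Fin 2 → AddCircle p}
    (hz : addOrderOf z = n) :
    ∃ γ : SL(2, ℤ), (γ : Matrix (Fin 2) (Fin 2) ℤ) • z = ![((p / n : 𝕜) : AddCircle p), 0] := by
  have ht := addOrderOf_period_div (p := p) hn
  have hnz : n • z = 0 := hz ▸ addOrderOf_nsmul_eq_zero z
  exact SpecialLinearGroup.exists_smul_eq_of_mem_zmultiples (addOrderOf_pos_iff.mp (by rwa [ht]))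
    (fun i => mem_zmultiples_of_nsmul_eq_zero hn (congrFun hnz i)) (hz.trans ht.symm)

end AddCircle

/-- `SL₂(ℤ)` acts transitively on the elements of (finite) order `n` in the torus
`𝕋² = (ℝ/ℤ)²`: if `z, z'` both have exact order `n`, there is `γ ∈ SL₂(ℤ)` with `γ·z = z'`,
where `γ` acts linearly via `(γ·z) i = ∑ j, γ i j • z j`. -/
theorem stmt2 (n : ℕ) (hn : 0 < n) (z z' : Fin 2 → AddCircle (1 : ℝ))
    (hz : addOrderOf z = n) (hz' : addOrderOf z' = n) :
    ∃ γ : Matrix.SpecialLinearGroup (Fin 2) ℤ,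
      (fun i => ∑ j, γ.val i j • z j) = z' := by
  obtain ⟨γ, hγ⟩ := AddCircle.exists_SL2_smul_eq_of_addOrderOf_eq hn hz
  obtain ⟨γ', hγ'⟩ := AddCircle.exists_SL2_smul_eq_of_addOrderOf_eq hn hz'
  refine ⟨γ'⁻¹ * γ, ?_⟩
  change ((γ'⁻¹ * γ : SL(2, ℤ)) : Matrix (Fin 2) (Fin 2) ℤ) • z = z'
  rw [Matrix.SpecialLinearGroup.coe_mul, mul_smul, hγ, ← hγ', smul_smul,
    ← Matrix.SpecialLinearGroup.coe_mul, inv_mul_cancel, Matrix.SpecialLinearGroup.coe_one,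
    one_smul]
end

section
/- Let G = SL₃(ℝ) and Γ = SL₃(ℤ). If γ ∈ Γ stabilizes the point gU₃(ℝ) ∈ G/U₃(ℝ) where g = A₁(r,θ) is the matrix with rows (1,0,0), (θ,r,0), (0,0,r⁻¹) for r > 0 and θ irrational, then γ belongs to the subgroup Γ₁ of integer matrices of the form with rows (1,0,m), (0,1,k), (0,0,1), m,k ∈ ℤ; conversely every element of Γ₁ stabilizes gU₃(ℝ). -/
/-- A `3×3` real matrix is unipotent upper triangular. -/
def IsUnipUpper (M : Matrix (Fin 3) (Fin 3) ℝ) : Prop :=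
  M 0 0 = 1 ∧ M 1 1 = 1 ∧ M 2 2 = 1 ∧ M 1 0 = 0 ∧ M 2 0 = 0 ∧ M 2 1 = 0

/-- The subgroup `U = U₃(ℝ)` of unipotent upper triangular matrices in `G = SL₃(ℝ)`. -/
def U3R : Subgroup (Matrix.SpecialLinearGroup (Fin 3) ℝ) where
  carrier := {g | IsUnipUpper g.val}
  one_mem' := by
    refine ⟨?_, ?_, ?_, ?_, ?_, ?_⟩ <;>
      simp [Matrix.SpecialLinearGroup.coe_one, Matrix.one_apply]
  mul_mem' := by
    rintro a b ⟨ha1, ha2, ha3, ha4, ha5, ha6⟩ ⟨hb1, hb2, hb3, hb4, hb5, hb6⟩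
    refine ⟨?_, ?_, ?_, ?_, ?_, ?_⟩ <;>
      simp [Matrix.SpecialLinearGroup.coe_mul, Matrix.mul_apply, Fin.sum_univ_three,
        ha1, ha2, ha3, ha4, ha5, ha6, hb1, hb2, hb3, hb4, hb5, hb6]
  inv_mem' := by
    rintro a ⟨ha1, ha2, ha3, ha4, ha5, ha6⟩
    refine ⟨?_, ?_, ?_, ?_, ?_, ?_⟩ <;>
      simp [Matrix.SpecialLinearGroup.coe_inv, Matrix.adjugate_fin_three,
        Matrix.vecHead, Matrix.vecTail,
        ha1, ha2, ha3, ha4, ha5, ha6]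

/-- The matrix `A₁(r,θ)` with rows `(1,0,0)`, `(θ,r,0)`, `(0,0,r⁻¹)`, as an element of
`SL₃(ℝ)` (for `r ≠ 0`). -/
noncomputable def A1 (r θ : ℝ) (hr : r ≠ 0) : Matrix.SpecialLinearGroup (Fin 3) ℝ :=
  ⟨!![1, 0, 0; θ, r, 0; 0, 0, r⁻¹], by
    simp [Matrix.det_fin_three, mul_inv_cancel₀ hr]⟩

/-!
`γ` fixes `A·U` exactly when `A⁻¹ γ A ∈ U`. Writing `a, b, e` for the entries `γ₀₀, γ₀₁, γ₁₁`,
the diagonal of `A⁻¹ γ A` is `(a + bθ, e - bθ, γ₂₂)`, so irrationality of `θ` forces `b = 0` and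
`a = e = 1`; the vanishing of the three entries below the diagonal then reduces to the vanishing of
`γ₁₀, γ₂₀, γ₂₁`. The parameter `r` only rescales entries by nonzero factors.
-/

lemma coe_A1 (r θ : ℝ) (hr : r ≠ 0) :
    (A1 r θ hr : Matrix (Fin 3) (Fin 3) ℝ) = !![1, 0, 0; θ, r, 0; 0, 0, r⁻¹] := rfl

lemma coe_A1_inv (r θ : ℝ) (hr : r ≠ 0) :
    (((A1 r θ hr)⁻¹ : Matrix.SpecialLinearGroup (Fin 3) ℝ) : Matrix (Fin 3) (Fin 3) ℝ) =
      !![1, 0, 0; -(θ * r⁻¹), r⁻¹, 0; 0, 0, r] := by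
  rw [Matrix.SpecialLinearGroup.coe_inv, coe_A1, Matrix.adjugate_fin_three]
  simp [hr]

lemma coe_A1_inv_mul_mul_A1 (r θ : ℝ) (hr : r ≠ 0) (g : Matrix.SpecialLinearGroup (Fin 3) ℝ) :
    (((A1 r θ hr)⁻¹ * (g * A1 r θ hr) : Matrix.SpecialLinearGroup (Fin 3) ℝ) :
        Matrix (Fin 3) (Fin 3) ℝ) =
      !![g 0 0 + g 0 1 * θ, r * g 0 1, r⁻¹ * g 0 2;
        r⁻¹ * (g 1 0 + (g 1 1 - g 0 0) * θ - g 0 1 * θ ^ 2), g 1 1 - g 0 1 * θ,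
          r⁻¹ ^ 2 * (g 1 2 - g 0 2 * θ);
        r * (g 2 0 + g 2 1 * θ), r ^ 2 * g 2 1, g 2 2] := by
  rw [Matrix.SpecialLinearGroup.coe_mul, Matrix.SpecialLinearGroup.coe_mul, coe_A1_inv, coe_A1]
  ext i j
  fin_cases i <;> fin_cases j <;>
    simp [Matrix.mul_apply, Fin.sum_univ_three] <;> field_simp <;> ring

lemma A1_inv_mul_mul_A1_mem_U3R_iff {r θ : ℝ} (hr : r ≠ 0)
    (g : Matrix.SpecialLinearGroup (Fin 3) ℝ) :
    (A1 r θ hr)⁻¹ * (g * A1 r θ hr) ∈ U3R ↔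
      g 0 0 + g 0 1 * θ = 1 ∧ g 1 1 - g 0 1 * θ = 1 ∧ g 2 2 = 1 ∧
      g 1 0 + (g 1 1 - g 0 0) * θ - g 0 1 * θ ^ 2 = 0 ∧ g 2 0 + g 2 1 * θ = 0 ∧ g 2 1 = 0 := by
  change IsUnipUpper _ ↔ _
  rw [IsUnipUpper, coe_A1_inv_mul_mul_A1]
  simp [hr]

theorem Irrational.intCast_add_intCast_mul_eq_iff {θ : ℝ} (hθ : Irrational θ) {p q p' q' : ℤ} :
    (p : ℝ) + q * θ = p' + q' * θ ↔ p = p' ∧ q = q' := by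
  refine ⟨fun h ↦ ?_, fun ⟨hp, hq⟩ ↦ by rw [hp, hq]⟩
  have hq : q = q' := by
    by_contra hne
    have : Irrational (((p - p' : ℤ) : ℝ) + ((q - q' : ℤ) : ℝ) * θ) :=
      (hθ.intCast_mul (sub_ne_zero.mpr hne)).intCast_add _
    exact this.ne_int 0 (by push_cast; linarith)
  subst hq
  exact ⟨by exact_mod_cast add_right_cancel h, rfl⟩

lemma Irrational.intCast_add_intCast_mul_eq_one {θ : ℝ} (hθ : Irrational θ) {p q : ℤ}
    (h : (p : ℝ) + q * θ = 1) : p = 1 ∧ q = 0 :=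
  hθ.intCast_add_intCast_mul_eq_iff.mp (by simpa using h)

lemma A1_inv_mul_map_mul_A1_mem_U3R_iff {r θ : ℝ} (hr : r ≠ 0) (hθ : Irrational θ)
    (γ : Matrix.SpecialLinearGroup (Fin 3) ℤ) :
    (A1 r θ hr)⁻¹ * (Matrix.SpecialLinearGroup.map (Int.castRingHom ℝ) γ * A1 r θ hr) ∈ U3R ↔
      ∃ m k : ℤ, γ.val = !![1, 0, m; 0, 1, k; 0, 0, 1] := by
  simp only [A1_inv_mul_mul_A1_mem_U3R_iff, Matrix.SpecialLinearGroup.map_apply_coe,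
    RingHom.mapMatrix_apply, Matrix.map_apply, eq_intCast]
  constructor
  · rintro ⟨h00, h11, h22, h10, h20, h21⟩
    obtain ⟨ha, hb⟩ := hθ.intCast_add_intCast_mul_eq_one h00
    obtain ⟨he, -⟩ := hθ.intCast_add_intCast_mul_eq_one (p := γ.val 1 1) (q := -γ.val 0 1)
      (by push_cast; linarith)
    have hi : γ.val 2 2 = 1 := by exact_mod_cast h22
    have hh : γ.val 2 1 = 0 := by exact_mod_cast h21
    have hg : γ.val 2 0 = 0 := by
      exact_mod_cast (by simpa [hh] using h20 : (γ.val 2 0 : ℝ) = 0)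
    have hd : γ.val 1 0 = 0 := by
      exact_mod_cast (by simpa [ha, hb, he] using h10 : (γ.val 1 0 : ℝ) = 0)
    refine ⟨γ.val 0 2, γ.val 1 2, ?_⟩
    ext i j
    fin_cases i <;> fin_cases j <;> simp [ha, hb, he, hi, hh, hg, hd]
  · rintro ⟨m, k, hγ⟩
    simp [hγ]

/-- if `γ ∈ Γ = SL₃(ℤ)` stabilizes the point `A₁(r,θ)·U₃(ℝ) ∈ SL₃(ℝ)/U₃(ℝ)`
for `r > 0` and `θ` irrational, then `γ` belongs to the subgroup `Γ₁` of integer matrices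
with rows `(1,0,m)`, `(0,1,k)`, `(0,0,1)`; conversely every element of `Γ₁` stabilizes it. -/
theorem stmt12 (r θ : ℝ) (hr : 0 < r) (hθ : Irrational θ)
    (γ : Matrix.SpecialLinearGroup (Fin 3) ℤ) :
    (QuotientGroup.mk (Matrix.SpecialLinearGroup.map (Int.castRingHom ℝ) γ * A1 r θ hr.ne') :
        Matrix.SpecialLinearGroup (Fin 3) ℝ ⧸ U3R) = QuotientGroup.mk (A1 r θ hr.ne')
      ↔ ∃ m k : ℤ, γ.val = !![1, 0, m; 0, 1, k; 0, 0, 1] := by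
  rw [eq_comm, QuotientGroup.eq]
  exact A1_inv_mul_map_mul_A1_mem_U3R_iff hr.ne' hθ γ
end

section
/- Let A be a C*-algebra, π an irreducible representation of A, and (π_i)_{i∈I} a family of nondegenerate representations of A. If some vector state of π (i.e., a state of the form a ↦ ⟨π(a)ξ, ξ⟩ for a unit vector ξ) lies in the weak* closure of the set of all vector states of the representations π_i, then every vector state of π lies in that weak* closure, and π is weakly contained in ⊕_i π_i (i.e., ⋂_i ker π_i ⊆ ker π). -/
/-!
Work in the topology of pointwise convergence on `A → ℂ`, and keep track of `‖η‖²` alongside each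
vector functional `φ_η = ⟪πᵢ(·) η, η⟫`: when `A` has no unit, `‖η‖²` is not a value of `φ_η`, yet it
is what allows limits to be renormalised to states. Let `W` be the closure of the pairs
`(φ_η, ‖η‖²)`. The vectors `x` with `(φ_x, ‖x‖²) ∈ W` form a closed set, invariant under every
`π c` because `φ_{π c x} = φ_x (c⋆ · c)` and `‖π c x‖² = φ_x (c⋆ c)` are continuous functions of
`(φ_x, ‖x‖²)` preserving the pairs. By irreducibility `ξ₀` is cyclic, so this set is all of `H`.
Dividing by the second coordinate, which is continuous near `1`, gives the approximation of every
vector state of `π`; and if all `πᵢ a` vanish, the closed condition `φ (a⋆ a) = 0` passes from the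
pairs to every `φ_x`, i.e. `π a x = 0`.
-/

open scoped ComplexInnerProductSpace
open Set Filter Topology

theorem mem_closure_pi_iff_forall_finset {ι E : Type*} [PseudoMetricSpace E] {f : ι → E}
    {S : Set (ι → E)} :
    f ∈ closure S ↔ ∀ (F : Finset ι) (ε : ℝ), 0 < ε → ∃ g ∈ S, ∀ i ∈ F, dist (f i) (g i) < ε := by
  refine ⟨fun h F ε hε => ?_, fun h => mem_closure_iff_nhds.2 fun t ht => ?_⟩
  · obtain ⟨g, hg, hgS⟩ := mem_closure_iff_nhds.1 h _
      (set_pi_mem_nhds F.finite_toSet fun i _ => Metric.ball_mem_nhds (f i) hε)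
    exact ⟨g, hgS, fun i hi => by simpa [dist_comm] using hg i hi⟩
  · rw [nhds_pi, Filter.mem_pi'] at ht
    obtain ⟨F, u, hu, hFu⟩ := ht
    have hsmall : ∀ᶠ ε in 𝓝[>] (0 : ℝ), ∀ i ∈ F, Metric.ball (f i) ε ⊆ u i :=
      F.eventually_all.2 fun i _ => by
        obtain ⟨r, hr, hball⟩ := Metric.mem_nhds_iff.1 (hu i)
        filter_upwards [Ioo_mem_nhdsGT hr] with ε hε
        exact (Metric.ball_subset_ball hε.2.le).trans hball
    obtain ⟨ε, hsub, hε⟩ := (hsmall.and self_mem_nhdsWithin).exists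
    obtain ⟨g, hgS, hg⟩ := h F ε hε
    exact ⟨g, hFu fun i hi => hsub i hi (by rw [Metric.mem_ball, dist_comm]; exact hg i hi), hgS⟩

section VectorFunctional

variable {A : Type*} [Semiring A] [Star A] [Algebra ℂ A]
  {H : Type*} [NormedAddCommGroup H] [InnerProductSpace ℂ H] [CompleteSpace H]

noncomputable def vectorFunctional (ρ : A →⋆ₐ[ℂ] (H →L[ℂ] H)) (x : H) : A → ℂ :=
  fun a => ⟪ρ a x, x⟫

variable (ρ : A →⋆ₐ[ℂ] (H →L[ℂ] H))

theorem vectorFunctional_star_mul_mul (c : A) (x : H) :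
    vectorFunctional ρ (ρ c x) = fun a => vectorFunctional ρ x (star c * a * c) := by
  ext a
  simp [vectorFunctional, map_star, ContinuousLinearMap.star_eq_adjoint,
    ContinuousLinearMap.adjoint_inner_left]

theorem vectorFunctional_star_mul_self (c : A) (x : H) :
    vectorFunctional ρ x (star c * c) = (‖ρ c x‖ ^ 2 : ℝ) := by
  simp [vectorFunctional, map_star, ContinuousLinearMap.star_eq_adjoint,
    ContinuousLinearMap.adjoint_inner_left, inner_self_eq_norm_sq_to_K]

theorem vectorFunctional_smul (z : ℂ) (x : H) :
    vectorFunctional ρ (z • x) = (‖z‖ ^ 2 : ℂ) • vectorFunctional ρ x := by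
  ext a
  simp only [vectorFunctional, map_smul, inner_smul_left, inner_smul_right, Pi.smul_apply,
    smul_eq_mul]
  rw [← mul_assoc, Complex.mul_conj']

theorem continuous_vectorFunctional : Continuous (vectorFunctional ρ) :=
  continuous_pi fun a => (ρ a).continuous.inner continuous_id

end VectorFunctional

section Family

variable {A : Type*} [Semiring A] [Star A] [Algebra ℂ A]
  {I : Type*} {Hi : I → Type*} [∀ i, NormedAddCommGroup (Hi i)]
  [∀ i, InnerProductSpace ℂ (Hi i)] [∀ i, CompleteSpace (Hi i)]
  (πi : ∀ i, A →⋆ₐ[ℂ] (Hi i →L[ℂ] Hi i))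

def vectorStates : Set (A → ℂ) := ⋃ i, vectorFunctional (πi i) '' Metric.sphere 0 1

def vectorFunctionalsWithNormSq : Set ((A → ℂ) × ℝ) :=
  ⋃ i, range fun η : Hi i => (vectorFunctional (πi i) η, ‖η‖ ^ 2)

theorem mem_closure_vectorStates_iff (f : A → ℂ) :
    f ∈ closure (vectorStates πi) ↔ ∀ (F : Finset A) (ε : ℝ), 0 < ε →
      ∃ (i : I) (η : Hi i), ‖η‖ = 1 ∧ ∀ a ∈ F, ‖f a - vectorFunctional (πi i) η a‖ < ε := by
  simp [mem_closure_pi_iff_forall_finset, vectorStates, dist_eq_norm]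

theorem mk_one_mem_closure_vectorFunctionalsWithNormSq {f : A → ℂ}
    (hf : f ∈ closure (vectorStates πi)) :
    (f, 1) ∈ closure (vectorFunctionalsWithNormSq πi) := by
  refine map_mem_closure (f := fun φ => (φ, (1 : ℝ))) (by fun_prop) hf ?_
  rintro _ ⟨_, ⟨i, rfl⟩, η, hη, rfl⟩
  exact mem_iUnion.2 ⟨i, η, by simp [mem_sphere_zero_iff_norm.1 hη]⟩

theorem mem_closure_vectorStates_of_mk_one_mem {f : A → ℂ}
    (hf : (f, 1) ∈ closure (vectorFunctionalsWithNormSq πi)) :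
    f ∈ closure (vectorStates πi) := by
  set W := vectorFunctionalsWithNormSq πi
  let normalize : (A → ℂ) × ℝ → A → ℂ := fun p => (p.2 : ℂ)⁻¹ • p.1
  have hcont : ContinuousWithinAt normalize (W ∩ {p | p.2 ≠ 0}) (f, 1) :=
    (((Complex.continuous_ofReal.comp continuous_snd).continuousAt.inv₀ (by simp)).smul
      continuousAt_fst).continuousWithinAt
  have hmem : (f, 1) ∈ closure (W ∩ {p | p.2 ≠ 0}) := by
    rw [inter_comm]
    exact (isOpen_ne_fun continuous_snd continuous_const).inter_closure ⟨one_ne_zero, hf⟩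
  have hmaps : MapsTo normalize (W ∩ {p | p.2 ≠ 0}) (vectorStates πi) := by
    rintro _ ⟨hW, hne⟩
    obtain ⟨i, η, rfl⟩ := mem_iUnion.1 hW
    have hη : η ≠ 0 := by simpa using hne
    refine mem_iUnion.2 ⟨i, (‖η‖ : ℂ)⁻¹ • η, by simpa using norm_smul_inv_norm (𝕜 := ℂ) hη, ?_⟩
    simp [normalize, vectorFunctional_smul]
  simpa [normalize] using hcont.mem_closure hmem hmaps

variable {H : Type*} [NormedAddCommGroup H] [InnerProductSpace ℂ H] [CompleteSpace H]
  (π : A →⋆ₐ[ℂ] (H →L[ℂ] H))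

theorem apply_mem_closure_vectorFunctionalsWithNormSq {x : H}
    (hx : (vectorFunctional π x, ‖x‖ ^ 2) ∈ closure (vectorFunctionalsWithNormSq πi)) (c : A) :
    (vectorFunctional π (π c x), ‖π c x‖ ^ 2) ∈ closure (vectorFunctionalsWithNormSq πi) := by
  let compress : (A → ℂ) × ℝ → (A → ℂ) × ℝ :=
    fun p => (fun a => p.1 (star c * a * c), (p.1 (star c * c)).re)
  have hcont : Continuous compress := by fun_prop
  have hmaps :
      MapsTo compress (vectorFunctionalsWithNormSq πi) (vectorFunctionalsWithNormSq πi) := by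
    rintro _ ⟨_, ⟨i, rfl⟩, η, rfl⟩
    exact mem_iUnion.2 ⟨i, πi i c η, by
      simp [compress, vectorFunctional_star_mul_mul, vectorFunctional_star_mul_self,
        -Complex.ofReal_pow]⟩
  simpa [compress, vectorFunctional_star_mul_mul, vectorFunctional_star_mul_self,
    -Complex.ofReal_pow] using map_mem_closure hcont hx hmaps

theorem mem_closure_vectorFunctionalsWithNormSq_of_dense {ξ₀ : H}
    (hξ₀ : Dense (range fun a => π a ξ₀))
    (h : (vectorFunctional π ξ₀, ‖ξ₀‖ ^ 2) ∈ closure (vectorFunctionalsWithNormSq πi)) (x : H) :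
    (vectorFunctional π x, ‖x‖ ^ 2) ∈ closure (vectorFunctionalsWithNormSq πi) := by
  have hclosed : IsClosed
      {x : H | (vectorFunctional π x, ‖x‖ ^ 2) ∈ closure (vectorFunctionalsWithNormSq πi)} :=
    isClosed_closure.preimage ((continuous_vectorFunctional π).prodMk (continuous_norm.pow 2))
  exact hclosed.closure_subset_iff.2
    (range_subset_iff.2 (apply_mem_closure_vectorFunctionalsWithNormSq πi π h)) (hξ₀ x)

theorem map_eq_zero_of_forall_vectorFunctional_mem_closure
    (hall : ∀ x : H, (vectorFunctional π x, ‖x‖ ^ 2) ∈ closure (vectorFunctionalsWithNormSq πi))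
    {a : A} (ha : ∀ i, πi i a = 0) : π a = 0 := by
  have hclosed : IsClosed {p : (A → ℂ) × ℝ | p.1 (star a * a) = 0} :=
    isClosed_eq ((continuous_apply _).comp continuous_fst) continuous_const
  have hW : vectorFunctionalsWithNormSq πi ⊆ {p | p.1 (star a * a) = 0} := by
    rintro _ ⟨_, ⟨i, rfl⟩, η, rfl⟩
    simp [vectorFunctional, ha i]
  ext x
  have := hclosed.closure_subset_iff.2 hW (hall x)
  simpa [vectorFunctional_star_mul_self] using this

end Family

theorem stmt14_general (A : Type) [NormedRing A] [StarRing A] [NormedAlgebra ℂ A]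
    (H : Type) [NormedAddCommGroup H] [InnerProductSpace ℂ H] [CompleteSpace H]
    (π : A →⋆ₐ[ℂ] (H →L[ℂ] H))
    (hirr : ∀ ξ : H, ξ ≠ 0 → Dense (Set.range fun a : A => π a ξ))
    (I : Type) (Hi : I → Type)
    [∀ i, NormedAddCommGroup (Hi i)] [∀ i, InnerProductSpace ℂ (Hi i)]
    [∀ i, CompleteSpace (Hi i)]
    (πi : ∀ i, A →⋆ₐ[ℂ] (Hi i →L[ℂ] Hi i))
    (ξ₀ : H) (hξ₀ : ‖ξ₀‖ = 1)
    (h0 : ∀ (F : Finset A) (ε : ℝ), 0 < ε → ∃ (i : I) (η : Hi i), ‖η‖ = 1 ∧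
      ∀ a ∈ F, ‖⟪π a ξ₀, ξ₀⟫ - ⟪πi i a η, η⟫‖ < ε) :
    (∀ ξ : H, ‖ξ‖ = 1 → ∀ (F : Finset A) (ε : ℝ), 0 < ε → ∃ (i : I) (η : Hi i), ‖η‖ = 1 ∧
      ∀ a ∈ F, ‖⟪π a ξ, ξ⟫ - ⟪πi i a η, η⟫‖ < ε)
    ∧ (∀ a : A, (∀ i, πi i a = 0) → π a = 0) := by
  have hcyclic := hirr ξ₀ (norm_ne_zero_iff.1 (hξ₀ ▸ one_ne_zero))
  have hstart : (vectorFunctional π ξ₀, ‖ξ₀‖ ^ 2) ∈ closure (vectorFunctionalsWithNormSq πi) := by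
    rw [hξ₀, one_pow]
    exact mk_one_mem_closure_vectorFunctionalsWithNormSq πi
      ((mem_closure_vectorStates_iff πi _).2 h0)
  have hall := mem_closure_vectorFunctionalsWithNormSq_of_dense πi π hcyclic hstart
  refine ⟨fun ξ hξ => (mem_closure_vectorStates_iff πi (vectorFunctional π ξ)).1 ?_,
    fun a => map_eq_zero_of_forall_vectorFunctional_mem_closure πi π hall⟩
  exact mem_closure_vectorStates_of_mk_one_mem πi (by simpa [hξ] using hall ξ)

/-- Fell: Let `A` be a C*-algebra, `π` an irreducible representation of `A`
(irreducibility: every nonzero vector is cyclic) and `(πᵢ)` a family of nondegenerate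
representations.  If some vector state of `π` lies in the weak* closure of the set of all
vector states of the `πᵢ` (closure expressed by approximation on finite sets), then every
vector state of `π` lies in that closure, and `π` is weakly contained in `⊕ᵢ πᵢ`, i.e.
`⋂ᵢ ker πᵢ ⊆ ker π`. -/
theorem stmt14 (A : Type) [NormedRing A] [StarRing A] [CStarRing A] [NormedAlgebra ℂ A]
    [StarModule ℂ A] [CompleteSpace A]
    (H : Type) [NormedAddCommGroup H] [InnerProductSpace ℂ H] [CompleteSpace H] [Nontrivial H]
    (π : A →⋆ₐ[ℂ] (H →L[ℂ] H))
    (hirr : ∀ ξ : H, ξ ≠ 0 → Dense (Set.range fun a : A => π a ξ))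
    (I : Type) (Hi : I → Type)
    [∀ i, NormedAddCommGroup (Hi i)] [∀ i, InnerProductSpace ℂ (Hi i)]
    [∀ i, CompleteSpace (Hi i)]
    (πi : ∀ i, A →⋆ₐ[ℂ] (Hi i →L[ℂ] Hi i))
    (hnd : ∀ i, Dense ((Submodule.span ℂ {y : Hi i | ∃ (a : A) (ξ : Hi i), πi i a ξ = y} :
      Submodule ℂ (Hi i)) : Set (Hi i)))
    (ξ₀ : H) (hξ₀ : ‖ξ₀‖ = 1)
    (h0 : ∀ (F : Finset A) (ε : ℝ), 0 < ε → ∃ (i : I) (η : Hi i), ‖η‖ = 1 ∧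
      ∀ a ∈ F, ‖⟪π a ξ₀, ξ₀⟫ - ⟪πi i a η, η⟫‖ < ε) :
    (∀ ξ : H, ‖ξ‖ = 1 → ∀ (F : Finset A) (ε : ℝ), 0 < ε → ∃ (i : I) (η : Hi i), ‖η‖ = 1 ∧
      ∀ a ∈ F, ‖⟪π a ξ, ξ⟫ - ⟪πi i a η, η⟫‖ < ε)
    ∧ (∀ a : A, (∀ i, πi i a = 0) → π a = 0) :=
  stmt14_general A H π hirr I Hi πi ξ₀ hξ₀ h0
end

section
/- Let X be a topological space on which a group Γ acts by homeomorphisms. Define an equivalence relation on X by x ∼ y iff the closures of the orbits Γ·x and Γ·y coincide. Then the quotient map q : X → X/∼ satisfies: q(x) lies in the closure of q(Y) for a Γ-invariant set Y ⊆ X if and only if x lies in the closure of Y; in particular the map sending closed Γ-invariant subsets of X to closed subsets of X/∼, A ↦ q(A), is a bijection onto the closed sets of the quotient space, provided the quotient map q is open. -/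
/-!
A closed `Γ`-invariant set `A` contains the orbit closure of each of its points, and every point
lies in its own orbit closure; so `A` is a union of `∼`-classes, i.e. `q⁻¹(q(A)) = A`, and `q(A)`
is closed in the quotient topology. Applied to `A = closure Y` (invariant because `Γ` acts by
homeomorphisms) this gives `closure (q(Y)) = q(closure Y)`. Conversely, since `q` is constant on
orbits, the preimage of any closed `B ⊆ X/∼` is a closed invariant set with `q(q⁻¹(B)) = B`.
-/

open Pointwise MulAction

section

variable {X Γ : Type*} [Group Γ] [MulAction Γ X]

theorem orbit_subset_of_smul_set_eq {Y : Set X} (hY : ∀ γ : Γ, γ • Y = Y) {y : X} (hy : y ∈ Y) :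
    orbit Γ y ⊆ Y := by
  rintro _ ⟨γ, rfl⟩
  rw [← hY γ]
  exact Set.smul_mem_smul_set hy

variable [TopologicalSpace X]

theorem smul_closure_eq_of_smul_set_eq [ContinuousConstSMul Γ X] {Y : Set X}
    (hY : ∀ γ : Γ, γ • Y = Y) (γ : Γ) : γ • closure Y = closure Y := by
  rw [← closure_smul, hY γ]

theorem mem_of_closure_orbit_eq {A : Set X} (hA : IsClosed A) (hAi : ∀ γ : Γ, γ • A = A)
    {x y : X} (hy : y ∈ A) (hxy : closure (orbit Γ x) = closure (orbit Γ y)) : x ∈ A :=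
  hA.closure_subset_iff.mpr (orbit_subset_of_smul_set_eq hAi hy) <|
    hxy ▸ subset_closure (mem_orbit_self x)

variable {s : Setoid X}

theorem preimage_image_mk_eq_of_isClosed
    (hs : ∀ x y : X, s.r x y → closure (orbit Γ x) = closure (orbit Γ y))
    {A : Set X} (hA : IsClosed A) (hAi : ∀ γ : Γ, γ • A = A) :
    Quotient.mk s ⁻¹' (Quotient.mk s '' A) = A := by
  refine (Set.subset_preimage_image _ A).antisymm' ?_
  rintro x ⟨y, hy, hyx⟩
  exact mem_of_closure_orbit_eq hA hAi hy (hs x y (Quotient.exact hyx.symm))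

theorem isClosed_image_mk_of_isClosed
    (hs : ∀ x y : X, s.r x y → closure (orbit Γ x) = closure (orbit Γ y))
    {A : Set X} (hA : IsClosed A) (hAi : ∀ γ : Γ, γ • A = A) :
    IsClosed (Quotient.mk s '' A) :=
  isQuotientMap_quotient_mk'.isClosed_preimage.mp <|
    (preimage_image_mk_eq_of_isClosed hs hA hAi).symm ▸ hA

theorem closure_image_mk_eq [ContinuousConstSMul Γ X]
    (hs : ∀ x y : X, s.r x y → closure (orbit Γ x) = closure (orbit Γ y))
    {Y : Set X} (hY : ∀ γ : Γ, γ • Y = Y) :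
    closure (Quotient.mk s '' Y) = Quotient.mk s '' closure Y :=
  (image_closure_subset_closure_image continuous_quotient_mk').antisymm' <|
    (isClosed_image_mk_of_isClosed hs isClosed_closure
      (smul_closure_eq_of_smul_set_eq hY)).closure_subset_iff.mpr
      (Set.image_mono subset_closure)

theorem mk_mem_closure_image_mk_iff [ContinuousConstSMul Γ X]
    (hs : ∀ x y : X, s.r x y → closure (orbit Γ x) = closure (orbit Γ y))
    {Y : Set X} (hY : ∀ γ : Γ, γ • Y = Y) (x : X) :
    Quotient.mk s x ∈ closure (Quotient.mk s '' Y) ↔ x ∈ closure Y := by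
  rw [closure_image_mk_eq hs hY, ← Set.mem_preimage,
    preimage_image_mk_eq_of_isClosed hs isClosed_closure (smul_closure_eq_of_smul_set_eq hY)]

theorem smul_preimage_mk_eq
    (hs : ∀ x y : X, closure (orbit Γ x) = closure (orbit Γ y) → s.r x y)
    (B : Set (Quotient s)) (γ : Γ) : γ • (Quotient.mk s ⁻¹' B) = Quotient.mk s ⁻¹' B := by
  have hmk : ∀ x : X, Quotient.mk s (γ • x) = Quotient.mk s x := fun x =>
    Quotient.sound (hs _ _ (by rw [orbit_smul]))
  rw [← Set.preimage_smul_inv]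
  ext x
  simp only [Set.mem_preimage, ← hmk (γ⁻¹ • x), smul_inv_smul]

theorem bijOn_image_mk_isClosed
    (hs : ∀ x y : X, s.r x y ↔ closure (orbit Γ x) = closure (orbit Γ y)) :
    Set.BijOn (fun A : Set X => Quotient.mk s '' A)
      {A : Set X | IsClosed A ∧ ∀ γ : Γ, γ • A = A} {B : Set (Quotient s) | IsClosed B} := by
  have hs' : ∀ x y : X, s.r x y → _ := fun x y => (hs x y).mp
  refine ⟨fun A hA => isClosed_image_mk_of_isClosed hs' hA.1 hA.2, ?_, ?_⟩
  · intro A hA A' hA' hAA'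
    rw [← preimage_image_mk_eq_of_isClosed hs' hA.1 hA.2,
      ← preimage_image_mk_eq_of_isClosed hs' hA'.1 hA'.2]
    exact congrArg _ hAA'
  · intro B hB
    exact ⟨Quotient.mk s ⁻¹' B,
      ⟨hB.preimage continuous_quotient_mk', smul_preimage_mk_eq (fun x y => (hs x y).mpr) B⟩,
      Set.image_preimage_eq B Quotient.mk_surjective⟩

end

/-- let a group `Γ` act by homeomorphisms on a topological space `X`, and let
`s` be the equivalence relation `x ∼ y ↔ closure (Γ·x) = closure (Γ·y)`.  Then for the
quotient map `q : X → X/∼` (with the quotient topology):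
(1) for every `Γ`-invariant `Y ⊆ X` and `x ∈ X`, `q(x) ∈ closure (q(Y))` iff `x ∈ closure Y`;
(2) provided `q` is open, `A ↦ q(A)` is a bijection from the closed `Γ`-invariant subsets of
`X` onto the closed subsets of the quasi-orbit space `X/∼`. -/
theorem stmt18 (X Γ : Type) [TopologicalSpace X] [Group Γ] [MulAction Γ X]
    (hcont : ∀ γ : Γ, Continuous fun x : X => γ • x)
    (s : Setoid X)
    (hs : ∀ x y : X, s.r x y ↔ closure (MulAction.orbit Γ x) = closure (MulAction.orbit Γ y)) :
    (∀ Y : Set X, (∀ γ : Γ, γ • Y = Y) → ∀ x : X,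
        Quotient.mk s x ∈ closure (Quotient.mk s '' Y) ↔ x ∈ closure Y)
    ∧ (IsOpenMap (Quotient.mk s) →
        Set.BijOn (fun A : Set X => Quotient.mk s '' A)
          {A : Set X | IsClosed A ∧ ∀ γ : Γ, γ • A = A}
          {B : Set (Quotient s) | IsClosed B}) := by
  have : ContinuousConstSMul Γ X := ⟨hcont⟩
  exact ⟨fun Y hY => mk_mem_closure_image_mk_iff (fun x y => (hs x y).mp) hY,
    fun _ => bijOn_image_mk_isClosed hs⟩
end
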